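/- Assume the δ-twisted antipode is an involution, S̃² = id. Then the cyclic operator τ₂ on H ⊗ H satisfies τ₂³ = id. -/

import Mathlib

/-!
Let `H` be a Hopf algebra over `ℂ` with coproduct `Δ = Coalgebra.comul`, counit
`ε = Coalgebra.counit`, antipode `S = HopfAlgebra.antipode` and unit `1`.  We fix a
character `δ : H →ₐ[ℂ] ℂ`.  The `δ`-twisted antipode is the linear map
`S̃(h) = ∑ δ(h₍₁₎) S(h₍₂₎)`.
-/

open TensorProduct

noncomputable section

variable (H : Type) [Ring H] [HopfAlgebra ℂ H]

/-- The `δ`-twisted antipode `S̃(h) = ∑ δ(h₍₁₎) S(h₍₂₎)`. -/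
def twistedAntipode (δ : H →ₐ[ℂ] ℂ) : H →ₗ[ℂ] H :=
  (TensorProduct.lid ℂ H).toLinearMap ∘ₗ
    (TensorProduct.map δ.toLinearMap (HopfAlgebra.antipode (R := ℂ))) ∘ₗ
      Coalgebra.comul

/-- The cyclic operator `τ₂ : H ⊗ H →ₗ H ⊗ H`, `τ₂(h¹ ⊗ h²) = Δ(S̃(h¹)) · (h² ⊗ 1)`,
where `·` is the componentwise product of `H ⊗ H`. -/
def tau2 (δ : H →ₐ[ℂ] ℂ) : H ⊗[ℂ] H →ₗ[ℂ] H ⊗[ℂ] H :=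
  LinearMap.mul' ℂ (H ⊗[ℂ] H) ∘ₗ
    TensorProduct.map (Coalgebra.comul ∘ₗ twistedAntipode H δ)
      ((TensorProduct.mk ℂ H H).flip 1)

open Coalgebra LinearMap

namespace Tau2Aux
variable {C A B M : Type} [AddCommGroup C] [Module ℂ C] [Coalgebra ℂ C]

/-- A representation indexed by pairs, as in the old `Coalgebra.Repr`. -/
abbrev Repr (R : Type) {A : Type} [CommSemiring R] [AddCommMonoid A] [Module R A]
    [CoalgebraStruct R A] (a : A) : Type := Coalgebra.Repr R a (A × A)

section Counit

lemma sum_counit_smul {c : C} (r : Repr ℂ c) :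
    ∑ i ∈ r.index, counit (R := ℂ) (r.left i) • r.right i = c := by
  calc ∑ i ∈ r.index, counit (R := ℂ) (r.left i) • r.right i
      = TensorProduct.lid ℂ C (∑ i ∈ r.index, counit (R := ℂ) (r.left i) ⊗ₜ[ℂ] r.right i) := by
        rw [map_sum]; simp
    _ = c := by rw [Coalgebra.sum_counit_tmul_eq r]; simp

lemma sum_smul_counit {c : C} (r : Repr ℂ c) :
    ∑ i ∈ r.index, counit (R := ℂ) (r.right i) • r.left i = c := by
  calc ∑ i ∈ r.index, counit (R := ℂ) (r.right i) • r.left i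
      = TensorProduct.rid ℂ C (∑ i ∈ r.index, r.left i ⊗ₜ[ℂ] counit (R := ℂ) (r.right i)) := by
        rw [map_sum]; simp
    _ = c := by rw [Coalgebra.sum_tmul_counit_eq r]; simp

end Counit

section ThreeSplit

variable [AddCommGroup M] [Module ℂ M]

lemma three_split (T : C ⊗[ℂ] (C ⊗[ℂ] C) →ₗ[ℂ] M) {c : C} (r : Repr ℂ c)
    (a : (i : r.ι) → Repr ℂ (r.left i)) (b : (i : r.ι) → Repr ℂ (r.right i)) :
    ∑ i ∈ r.index, ∑ j ∈ (a i).index,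
      T ((a i).left j ⊗ₜ[ℂ] ((a i).right j ⊗ₜ[ℂ] r.right i))
    = ∑ i ∈ r.index, ∑ j ∈ (b i).index,
      T (r.left i ⊗ₜ[ℂ] ((b i).left j ⊗ₜ[ℂ] (b i).right j)) := by
  have h := Coalgebra.sum_tmul_tmul_eq r a b
  have := congrArg T h
  simpa [map_sum] using this

end ThreeSplit

section Conv

variable [Ring A] [Algebra ℂ A] [Ring B] [Algebra ℂ B]

/-- Convolution product. -/
def conv (f g : C →ₗ[ℂ] A) : C →ₗ[ℂ] A :=
  LinearMap.mul' ℂ A ∘ₗ TensorProduct.map f g ∘ₗ Coalgebra.comul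

lemma conv_apply_repr (f g : C →ₗ[ℂ] A) {c : C} (r : Repr ℂ c) :
    conv f g c = ∑ i ∈ r.index, f (r.left i) * g (r.right i) := by
  simp only [conv, LinearMap.comp_apply, ← r.eq, map_sum, TensorProduct.map_tmul,
    LinearMap.mul'_apply]

/-- Convolution unit. -/
def convOne : C →ₗ[ℂ] A := Algebra.linearMap ℂ A ∘ₗ Coalgebra.counit

lemma convOne_apply (c : C) : (convOne : C →ₗ[ℂ] A) c
    = algebraMap ℂ A (counit (R := ℂ) c) := rfl

lemma conv_convOne (f : C →ₗ[ℂ] A) : conv f convOne = f := by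
  refine LinearMap.ext fun c => ?_
  rw [conv_apply_repr f convOne (Repr.arbitrary ℂ c)]
  calc ∑ i ∈ (Repr.arbitrary ℂ c).index,
        f ((Repr.arbitrary ℂ c).left i) * convOne ((Repr.arbitrary ℂ c).right i)
      = ∑ i ∈ (Repr.arbitrary ℂ c).index,
        f (counit (R := ℂ) ((Repr.arbitrary ℂ c).right i) • (Repr.arbitrary ℂ c).left i) := by
        refine Finset.sum_congr rfl fun i _ => ?_
        rw [convOne_apply, ← Algebra.commutes, ← Algebra.smul_def, map_smul]
    _ = f c := by rw [← map_sum, sum_smul_counit]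

lemma convOne_conv (f : C →ₗ[ℂ] A) : conv convOne f = f := by
  refine LinearMap.ext fun c => ?_
  rw [conv_apply_repr convOne f (Repr.arbitrary ℂ c)]
  calc ∑ i ∈ (Repr.arbitrary ℂ c).index,
        convOne ((Repr.arbitrary ℂ c).left i) * f ((Repr.arbitrary ℂ c).right i)
      = ∑ i ∈ (Repr.arbitrary ℂ c).index,
        f (counit (R := ℂ) ((Repr.arbitrary ℂ c).left i) • (Repr.arbitrary ℂ c).right i) := by
        refine Finset.sum_congr rfl fun i _ => ?_
        rw [convOne_apply, ← Algebra.smul_def, map_smul]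
    _ = f c := by rw [← map_sum, sum_counit_smul]

lemma conv_assoc (f g k : C →ₗ[ℂ] A) : conv (conv f g) k = conv f (conv g k) := by
  refine LinearMap.ext fun c => ?_
  set r := Repr.arbitrary ℂ c with hr
  set a : (i : r.ι) → Repr ℂ (r.left i) := fun i => Repr.arbitrary ℂ (r.left i) with ha
  set b : (i : r.ι) → Repr ℂ (r.right i) := fun i => Repr.arbitrary ℂ (r.right i) with hb
  have key := three_split (LinearMap.mul' ℂ A ∘ₗ
    TensorProduct.map f (LinearMap.mul' ℂ A ∘ₗ TensorProduct.map g k)) r a b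
  simp only [LinearMap.comp_apply, TensorProduct.map_tmul, LinearMap.mul'_apply] at key
  rw [conv_apply_repr (conv f g) k r, conv_apply_repr f (conv g k) r]
  calc ∑ i ∈ r.index, conv f g (r.left i) * k (r.right i)
      = ∑ i ∈ r.index, ∑ j ∈ (a i).index,
          f ((a i).left j) * (g ((a i).right j) * k (r.right i)) := by
        refine Finset.sum_congr rfl fun i _ => ?_
        rw [conv_apply_repr f g (a i), Finset.sum_mul]
        simp [mul_assoc]
    _ = ∑ i ∈ r.index, ∑ j ∈ (b i).index,
          f (r.left i) * (g ((b i).left j) * k ((b i).right j)) := key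
    _ = ∑ i ∈ r.index, f (r.left i) * conv g k (r.right i) := by
        refine Finset.sum_congr rfl fun i _ => ?_
        rw [conv_apply_repr g k (b i), Finset.mul_sum]

variable {C' : Type} [AddCommGroup C'] [Module ℂ C'] [Coalgebra ℂ C']

lemma conv_pull (ψ : C' →ₗ[ℂ] C)
    (hψ : Coalgebra.comul ∘ₗ ψ = TensorProduct.map ψ ψ ∘ₗ Coalgebra.comul)
    (f g : C →ₗ[ℂ] A) : conv (f ∘ₗ ψ) (g ∘ₗ ψ) = conv f g ∘ₗ ψ := by
  unfold conv
  rw [TensorProduct.map_comp, LinearMap.comp_assoc, LinearMap.comp_assoc, ← hψ]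
  rfl

lemma convOne_pull (ψ : C' →ₗ[ℂ] C)
    (hψ : Coalgebra.counit ∘ₗ ψ = Coalgebra.counit (R := ℂ)) :
    (convOne : C →ₗ[ℂ] A) ∘ₗ ψ = convOne := by
  unfold convOne
  rw [LinearMap.comp_assoc, hψ]

lemma conv_push (ι : A →ₐ[ℂ] B) (f g : C →ₗ[ℂ] A) :
    ι.toLinearMap ∘ₗ conv f g = conv (ι.toLinearMap ∘ₗ f) (ι.toLinearMap ∘ₗ g) := by
  have hmul : ι.toLinearMap ∘ₗ LinearMap.mul' ℂ A
      = LinearMap.mul' ℂ B ∘ₗ TensorProduct.map ι.toLinearMap ι.toLinearMap := by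
    apply TensorProduct.ext'
    intro x y
    simp
  unfold conv
  rw [← LinearMap.comp_assoc, ← LinearMap.comp_assoc, hmul, TensorProduct.map_comp]
  simp only [LinearMap.comp_assoc]

lemma convOne_push (ι : A →ₐ[ℂ] B) :
    ι.toLinearMap ∘ₗ (convOne : C →ₗ[ℂ] A) = convOne := by
  refine LinearMap.ext fun c => ?_
  simp [convOne_apply, AlgHom.commutes]

end Conv

section Hopf

variable {H : Type} [Ring H] [HopfAlgebra ℂ H]

/-- The antipode as a linear map. -/
def aS : H →ₗ[ℂ] H := HopfAlgebra.antipode ℂ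

/-- `h ↦ h ⊗ 1` as a linear map. -/
def inl : H →ₗ[ℂ] H ⊗[ℂ] H :=
  (Algebra.TensorProduct.includeLeft (R := ℂ) (S := ℂ) (A := H) (B := H)).toLinearMap

/-- `h ↦ 1 ⊗ h` as a linear map. -/
def inr : H →ₗ[ℂ] H ⊗[ℂ] H :=
  (Algebra.TensorProduct.includeRight (R := ℂ) (A := H) (B := H)).toLinearMap

@[simp] lemma inl_apply (h : H) : inl h = h ⊗ₜ[ℂ] 1 := rfl
@[simp] lemma inr_apply (h : H) : inr h = 1 ⊗ₜ[ℂ] h := rfl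

/-- `h ⊗ g ↦ ε(g) • h`. -/
def pr1 : H ⊗[ℂ] H →ₗ[ℂ] H :=
  (TensorProduct.rid ℂ H).toLinearMap ∘ₗ LinearMap.lTensor H (Coalgebra.counit (R := ℂ))

/-- `h ⊗ g ↦ ε(h) • g`. -/
def pr2 : H ⊗[ℂ] H →ₗ[ℂ] H :=
  (TensorProduct.lid ℂ H).toLinearMap ∘ₗ LinearMap.rTensor H (Coalgebra.counit (R := ℂ))

@[simp] lemma pr1_tmul (h g : H) : pr1 (h ⊗ₜ[ℂ] g) = counit (R := ℂ) g • h := rfl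
@[simp] lemma pr2_tmul (h g : H) : pr2 (h ⊗ₜ[ℂ] g) = counit (R := ℂ) h • g := rfl

lemma comul_tmul {h g : H} (rh : Repr ℂ h) (rg : Repr ℂ g) :
    Coalgebra.comul (R := ℂ) (h ⊗ₜ[ℂ] g)
      = ∑ i ∈ rh.index, ∑ j ∈ rg.index,
        (rh.left i ⊗ₜ[ℂ] rg.left j) ⊗ₜ[ℂ] (rh.right i ⊗ₜ[ℂ] rg.right j) := by
  have e : CoalgebraStruct.comul (R := ℂ) (h ⊗ₜ[ℂ] g)
      = TensorProduct.tensorTensorTensorComm ℂ H H H H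
          (CoalgebraStruct.comul (R := ℂ) h ⊗ₜ[ℂ] CoalgebraStruct.comul (R := ℂ) g) := rfl
  rw [e, ← rh.eq, ← rg.eq, TensorProduct.sum_tmul, map_sum]
  refine Finset.sum_congr rfl fun i _ => ?_
  rw [TensorProduct.tmul_sum, map_sum]
  refine Finset.sum_congr rfl fun j _ => ?_
  rfl

lemma counit_tmul (h g : H) :
    counit (R := ℂ) (h ⊗ₜ[ℂ] g) = counit (R := ℂ) h * counit (R := ℂ) g := by
  simp [CoalgebraStruct.counit, mul_comm]

end Hopf
section Hopf2

variable {H A : Type} [Ring H] [HopfAlgebra ℂ H] [Ring A] [Algebra ℂ A]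

lemma sum_counit_mul_counit {c : H} (r : Repr ℂ c) :
    ∑ i ∈ r.index, counit (R := ℂ) (r.left i) * counit (R := ℂ) (r.right i)
      = counit (R := ℂ) c := by
  have h := congrArg (counit (R := ℂ)) (sum_counit_smul r)
  simpa [map_sum, smul_eq_mul] using h

lemma conv_apply_tmul (f g : H ⊗[ℂ] H →ₗ[ℂ] A) {h k : H}
    (rh : Repr ℂ h) (rk : Repr ℂ k) :
    conv f g (h ⊗ₜ[ℂ] k) = ∑ i ∈ rh.index, ∑ j ∈ rk.index,
      f (rh.left i ⊗ₜ[ℂ] rk.left j) * g (rh.right i ⊗ₜ[ℂ] rk.right j) := by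
  rw [conv, LinearMap.comp_apply, LinearMap.comp_apply, comul_tmul rh rk]
  simp only [map_sum, TensorProduct.map_tmul, LinearMap.mul'_apply]

lemma e1 (u v : H →ₗ[ℂ] A) :
    conv (u ∘ₗ pr1) (v ∘ₗ pr2) = LinearMap.mul' ℂ A ∘ₗ TensorProduct.map u v := by
  apply TensorProduct.ext'
  intro h g
  set rh := Repr.arbitrary ℂ h
  set rg := Repr.arbitrary ℂ g
  rw [conv_apply_tmul _ _ rh rg]
  have rhs : (LinearMap.mul' ℂ A ∘ₗ TensorProduct.map u v) (h ⊗ₜ[ℂ] g)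
      = (∑ i ∈ rh.index, counit (R := ℂ) (rh.right i) • u (rh.left i)) *
        (∑ j ∈ rg.index, counit (R := ℂ) (rg.left j) • v (rg.right j)) := by
    have h1 : u h = ∑ i ∈ rh.index, counit (R := ℂ) (rh.right i) • u (rh.left i) := by
      conv_lhs => rw [← sum_smul_counit rh]
      rw [map_sum]; simp only [map_smul]
    have h2 : v g = ∑ j ∈ rg.index, counit (R := ℂ) (rg.left j) • v (rg.right j) := by
      conv_lhs => rw [← sum_counit_smul rg]
      rw [map_sum]; simp only [map_smul]
    simp only [LinearMap.comp_apply, TensorProduct.map_tmul, LinearMap.mul'_apply]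
    rw [h1, h2]
  rw [rhs, Finset.sum_mul_sum]
  refine Finset.sum_congr rfl fun i _ => Finset.sum_congr rfl fun j _ => ?_
  simp only [LinearMap.comp_apply, pr1_tmul, pr2_tmul, map_smul]
  rw [smul_mul_smul_comm, smul_mul_smul_comm, mul_comm]

lemma e2 (u v : H →ₗ[ℂ] A) :
    conv (u ∘ₗ pr2) (v ∘ₗ pr1) = LinearMap.mul' ℂ A ∘ₗ TensorProduct.map u v ∘ₗ
      (TensorProduct.comm ℂ H H).toLinearMap := by
  apply TensorProduct.ext'
  intro h g
  set rh := Repr.arbitrary ℂ h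
  set rg := Repr.arbitrary ℂ g
  rw [conv_apply_tmul _ _ rh rg]
  have rhs : (LinearMap.mul' ℂ A ∘ₗ TensorProduct.map u v ∘ₗ
        (TensorProduct.comm ℂ H H).toLinearMap) (h ⊗ₜ[ℂ] g)
      = (∑ j ∈ rg.index, counit (R := ℂ) (rg.right j) • u (rg.left j)) *
        (∑ i ∈ rh.index, counit (R := ℂ) (rh.left i) • v (rh.right i)) := by
    have h1 : u g = ∑ j ∈ rg.index, counit (R := ℂ) (rg.right j) • u (rg.left j) := by
      conv_lhs => rw [← sum_smul_counit rg]
      rw [map_sum]; simp only [map_smul]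
    have h2 : v h = ∑ i ∈ rh.index, counit (R := ℂ) (rh.left i) • v (rh.right i) := by
      conv_lhs => rw [← sum_counit_smul rh]
      rw [map_sum]; simp only [map_smul]
    simp only [LinearMap.comp_apply, LinearEquiv.coe_coe, TensorProduct.comm_tmul,
      TensorProduct.map_tmul, LinearMap.mul'_apply]
    rw [h1, h2]
  rw [rhs, Finset.sum_mul_sum, Finset.sum_comm]
  refine Finset.sum_congr rfl fun i _ => Finset.sum_congr rfl fun j _ => ?_
  simp only [LinearMap.comp_apply, pr1_tmul, pr2_tmul, map_smul]
  rw [smul_mul_smul_comm, smul_mul_smul_comm, mul_comm]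

lemma e3 (u v : H →ₗ[ℂ] H) :
    conv (inl ∘ₗ u) (inr ∘ₗ v)
      = TensorProduct.map u v ∘ₗ Coalgebra.comul := by
  refine LinearMap.ext fun c => ?_
  set r := Repr.arbitrary ℂ c
  rw [conv_apply_repr _ _ r]
  have : ∀ i ∈ r.index, (inl ∘ₗ u) (r.left i) * (inr ∘ₗ v) (r.right i)
      = u (r.left i) ⊗ₜ[ℂ] v (r.right i) := by
    intro i _
    show (u (r.left i) ⊗ₜ[ℂ] 1) * (1 ⊗ₜ[ℂ] v (r.right i)) = _
    rw [Algebra.TensorProduct.tmul_mul_tmul, mul_one, one_mul]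
  rw [Finset.sum_congr rfl this]
  simp only [LinearMap.comp_apply, ← r.eq, map_sum, TensorProduct.map_tmul]

lemma e4 (u v : H →ₗ[ℂ] H) :
    conv (inr ∘ₗ u) (inl ∘ₗ v)
      = TensorProduct.map v u ∘ₗ (TensorProduct.comm ℂ H H).toLinearMap ∘ₗ
        Coalgebra.comul := by
  refine LinearMap.ext fun c => ?_
  set r := Repr.arbitrary ℂ c
  rw [conv_apply_repr _ _ r]
  have : ∀ i ∈ r.index, (inr ∘ₗ u) (r.left i) * (inl ∘ₗ v) (r.right i)
      = v (r.right i) ⊗ₜ[ℂ] u (r.left i) := by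
    intro i _
    show (1 ⊗ₜ[ℂ] u (r.left i)) * (v (r.right i) ⊗ₜ[ℂ] 1) = _
    rw [Algebra.TensorProduct.tmul_mul_tmul, mul_one, one_mul]
  rw [Finset.sum_congr rfl this]
  simp [← r.eq, map_sum]

/-- `pr1` is a coalgebra morphism. -/
lemma comul_comp_pr1 :
    Coalgebra.comul ∘ₗ (pr1 : H ⊗[ℂ] H →ₗ[ℂ] H)
      = TensorProduct.map pr1 pr1 ∘ₗ Coalgebra.comul := by
  apply TensorProduct.ext'
  intro h g
  set rh := Repr.arbitrary ℂ h
  set rg := Repr.arbitrary ℂ g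
  have lhs : (Coalgebra.comul ∘ₗ (pr1 : H ⊗[ℂ] H →ₗ[ℂ] H)) (h ⊗ₜ[ℂ] g)
      = counit (R := ℂ) g • Coalgebra.comul (R := ℂ) h := by
    simp only [LinearMap.comp_apply, pr1_tmul, map_smul]
  rw [lhs, LinearMap.comp_apply, comul_tmul rh rg, map_sum]
  simp only [map_sum, TensorProduct.map_tmul, pr1_tmul]
  rw [Finset.sum_comm]
  symm
  have : ∀ j ∈ rg.index, ∑ i ∈ rh.index,
      (counit (R := ℂ) (rg.left j) * counit (R := ℂ) (rg.right j)) •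
        (rh.left i ⊗ₜ[ℂ] rh.right i)
      = (counit (R := ℂ) (rg.left j) * counit (R := ℂ) (rg.right j)) •
          Coalgebra.comul (R := ℂ) h := by
    intro j _
    rw [← Finset.smul_sum, rh.eq]
  calc ∑ j ∈ rg.index, ∑ i ∈ rh.index,
        (counit (R := ℂ) (rg.left j) • rh.left i) ⊗ₜ[ℂ] (counit (R := ℂ) (rg.right j) • rh.right i)
      = ∑ j ∈ rg.index, ∑ i ∈ rh.index,
        (counit (R := ℂ) (rg.left j) * counit (R := ℂ) (rg.right j)) •
          (rh.left i ⊗ₜ[ℂ] rh.right i) := by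
        refine Finset.sum_congr rfl fun j _ => Finset.sum_congr rfl fun i _ => ?_
        rw [TensorProduct.smul_tmul_smul]
    _ = ∑ j ∈ rg.index, (counit (R := ℂ) (rg.left j) * counit (R := ℂ) (rg.right j)) •
          Coalgebra.comul (R := ℂ) h := Finset.sum_congr rfl this
    _ = counit (R := ℂ) g • Coalgebra.comul (R := ℂ) h := by
        rw [← Finset.sum_smul, sum_counit_mul_counit]

/-- `pr2` is a coalgebra morphism. -/
lemma comul_comp_pr2 :
    Coalgebra.comul ∘ₗ (pr2 : H ⊗[ℂ] H →ₗ[ℂ] H)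
      = TensorProduct.map pr2 pr2 ∘ₗ Coalgebra.comul := by
  apply TensorProduct.ext'
  intro h g
  set rh := Repr.arbitrary ℂ h
  set rg := Repr.arbitrary ℂ g
  have lhs : (Coalgebra.comul ∘ₗ (pr2 : H ⊗[ℂ] H →ₗ[ℂ] H)) (h ⊗ₜ[ℂ] g)
      = counit (R := ℂ) h • Coalgebra.comul (R := ℂ) g := by
    simp only [LinearMap.comp_apply, pr2_tmul, map_smul]
  rw [lhs, LinearMap.comp_apply, comul_tmul rh rg, map_sum]
  simp only [map_sum, TensorProduct.map_tmul, pr2_tmul]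
  symm
  calc ∑ i ∈ rh.index, ∑ j ∈ rg.index,
        (counit (R := ℂ) (rh.left i) • rg.left j) ⊗ₜ[ℂ] (counit (R := ℂ) (rh.right i) • rg.right j)
      = ∑ i ∈ rh.index, ∑ j ∈ rg.index,
        (counit (R := ℂ) (rh.left i) * counit (R := ℂ) (rh.right i)) •
          (rg.left j ⊗ₜ[ℂ] rg.right j) := by
        refine Finset.sum_congr rfl fun i _ => Finset.sum_congr rfl fun j _ => ?_
        rw [TensorProduct.smul_tmul_smul]
    _ = ∑ i ∈ rh.index, (counit (R := ℂ) (rh.left i) * counit (R := ℂ) (rh.right i)) •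
          Coalgebra.comul (R := ℂ) g := by
        refine Finset.sum_congr rfl fun i _ => ?_
        rw [← Finset.smul_sum, rg.eq]
    _ = counit (R := ℂ) h • Coalgebra.comul (R := ℂ) g := by
        rw [← Finset.sum_smul, sum_counit_mul_counit]

lemma counit_comp_pr1 :
    Coalgebra.counit ∘ₗ (pr1 : H ⊗[ℂ] H →ₗ[ℂ] H) = Coalgebra.counit (R := ℂ) := by
  apply TensorProduct.ext'
  intro h g
  show counit (R := ℂ) (pr1 (h ⊗ₜ[ℂ] g)) = counit (R := ℂ) (h ⊗ₜ[ℂ] g)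
  rw [pr1_tmul, map_smul, counit_tmul, smul_eq_mul, mul_comm]

lemma counit_comp_pr2 :
    Coalgebra.counit ∘ₗ (pr2 : H ⊗[ℂ] H →ₗ[ℂ] H) = Coalgebra.counit (R := ℂ) := by
  apply TensorProduct.ext'
  intro h g
  show counit (R := ℂ) (pr2 (h ⊗ₜ[ℂ] g)) = counit (R := ℂ) (h ⊗ₜ[ℂ] g)
  rw [pr2_tmul, map_smul, counit_tmul, smul_eq_mul]

/-- `mul'` is a coalgebra morphism. -/
lemma comul_comp_mul' :
    Coalgebra.comul ∘ₗ (LinearMap.mul' ℂ H)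
      = TensorProduct.map (LinearMap.mul' ℂ H) (LinearMap.mul' ℂ H) ∘ₗ
        (Coalgebra.comul (R := ℂ) (A := H ⊗[ℂ] H)) := by
  apply TensorProduct.ext'
  intro h g
  set rh := Repr.arbitrary ℂ h
  set rg := Repr.arbitrary ℂ g
  rw [LinearMap.comp_apply, LinearMap.comp_apply, LinearMap.mul'_apply,
    Bialgebra.comul_mul, ← rh.eq, ← rg.eq, Finset.sum_mul_sum, comul_tmul rh rg, map_sum]
  simp only [map_sum, TensorProduct.map_tmul, LinearMap.mul'_apply]
  refine Finset.sum_congr rfl fun i _ => Finset.sum_congr rfl fun j _ => ?_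
  rw [Algebra.TensorProduct.tmul_mul_tmul]

lemma counit_comp_mul' :
    Coalgebra.counit ∘ₗ (LinearMap.mul' ℂ H)
      = Coalgebra.counit (R := ℂ) (A := H ⊗[ℂ] H) := by
  apply TensorProduct.ext'
  intro h g
  show counit (R := ℂ) (h * g) = counit (R := ℂ) (h ⊗ₜ[ℂ] g)
  rw [Bialgebra.counit_mul, counit_tmul]

/-- The Hopf axioms in convolution form. -/
lemma conv_aS_id : conv (aS : H →ₗ[ℂ] H) LinearMap.id = convOne := by
  have h := HopfAlgebra.mul_antipode_rTensor_comul (R := ℂ) (A := H)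
  have e : TensorProduct.map (aS : H →ₗ[ℂ] H) (LinearMap.id : H →ₗ[ℂ] H)
      = LinearMap.rTensor H (HopfAlgebra.antipode (R := ℂ)) := rfl
  rw [conv, e]
  exact h

lemma conv_id_aS : conv (LinearMap.id : H →ₗ[ℂ] H) aS = convOne := by
  have h := HopfAlgebra.mul_antipode_lTensor_comul (R := ℂ) (A := H)
  have e : TensorProduct.map (LinearMap.id : H →ₗ[ℂ] H) (aS : H →ₗ[ℂ] H)
      = LinearMap.lTensor H (HopfAlgebra.antipode (R := ℂ)) := rfl
  rw [conv, e]
  exact h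

end Hopf2
section Hopf3

variable {H : Type} [Ring H] [HopfAlgebra ℂ H]

lemma conv_inl_inr : conv (inl : H →ₗ[ℂ] H ⊗[ℂ] H) inr = Coalgebra.comul := by
  have h := e3 (LinearMap.id : H →ₗ[ℂ] H) LinearMap.id
  simpa using h

lemma conv_pr1_pr2 : conv (pr1 : H ⊗[ℂ] H →ₗ[ℂ] H) pr2 = LinearMap.mul' ℂ H := by
  have h := e1 (LinearMap.id : H →ₗ[ℂ] H) LinearMap.id
  simpa using h

lemma inl_comp_toLinearMap :
    (Algebra.TensorProduct.includeLeft (R := ℂ) (S := ℂ) (A := H) (B := H)).toLinearMap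
      = inl := rfl

lemma inr_comp_toLinearMap :
    (Algebra.TensorProduct.includeRight (R := ℂ) (A := H) (B := H)).toLinearMap
      = inr := rfl

lemma comulAlgHom_toLinearMap :
    (Bialgebra.comulAlgHom ℂ H).toLinearMap = (Coalgebra.comul : H →ₗ[ℂ] H ⊗[ℂ] H) := rfl

/-- The antipode is an anti-coalgebra morphism, in convolution form. -/
lemma comul_aS_conv :
    Coalgebra.comul ∘ₗ (aS : H →ₗ[ℂ] H) = conv (inr ∘ₗ aS) (inl ∘ₗ aS) := by
  -- X ⬝ Δ = 1
  have hX : conv (conv (inr ∘ₗ (aS : H →ₗ[ℂ] H)) (inl ∘ₗ aS)) Coalgebra.comul = convOne := by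
    rw [← conv_inl_inr, conv_assoc, ← conv_assoc (inl ∘ₗ (aS : H →ₗ[ℂ] H))]
    have h1 : conv (inl ∘ₗ (aS : H →ₗ[ℂ] H)) inl = convOne := by
      have : conv (inl ∘ₗ (aS : H →ₗ[ℂ] H)) (inl ∘ₗ LinearMap.id) = convOne := by
        rw [← inl_comp_toLinearMap, ← conv_push, conv_aS_id, inl_comp_toLinearMap]
        exact convOne_push _
      simpa using this
    rw [h1, convOne_conv]
    have h2 : conv (inr ∘ₗ (aS : H →ₗ[ℂ] H)) (inr ∘ₗ LinearMap.id) = convOne := by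
      rw [← inr_comp_toLinearMap, ← conv_push, conv_aS_id]
      exact convOne_push _
    simpa using h2
  -- Δ ⬝ (Δ ∘ S) = 1
  have hD : conv Coalgebra.comul (Coalgebra.comul ∘ₗ (aS : H →ₗ[ℂ] H)) = convOne := by
    have : conv ((Coalgebra.comul : H →ₗ[ℂ] H ⊗[ℂ] H) ∘ₗ LinearMap.id)
        (Coalgebra.comul ∘ₗ aS) = convOne := by
      rw [← comulAlgHom_toLinearMap, ← conv_push, conv_id_aS]
      exact convOne_push _
    simpa using this
  calc Coalgebra.comul ∘ₗ (aS : H →ₗ[ℂ] H)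
      = conv convOne (Coalgebra.comul ∘ₗ aS) := (convOne_conv _).symm
    _ = conv (conv (conv (inr ∘ₗ aS) (inl ∘ₗ aS)) Coalgebra.comul)
        (Coalgebra.comul ∘ₗ aS) := by rw [hX]
    _ = conv (conv (inr ∘ₗ aS) (inl ∘ₗ aS))
        (conv Coalgebra.comul (Coalgebra.comul ∘ₗ aS)) := conv_assoc _ _ _
    _ = conv (conv (inr ∘ₗ aS) (inl ∘ₗ aS)) convOne := by rw [hD]
    _ = conv (inr ∘ₗ aS) (inl ∘ₗ aS) := conv_convOne _

lemma comul_comp_aS :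
    Coalgebra.comul ∘ₗ (aS : H →ₗ[ℂ] H)
      = TensorProduct.map aS aS ∘ₗ (TensorProduct.comm ℂ H H).toLinearMap ∘ₗ
        Coalgebra.comul := by
  rw [comul_aS_conv, e4]

lemma comul_aS_repr {x : H} (r : Repr ℂ x) :
    Coalgebra.comul (R := ℂ) (aS x)
      = ∑ i ∈ r.index, aS (r.right i) ⊗ₜ[ℂ] aS (r.left i) := by
  have h := congrArg (fun φ => φ x) comul_comp_aS
  simp only [LinearMap.comp_apply] at h
  rw [h, ← r.eq, map_sum, map_sum]
  simp

/-- The antipode is an anti-algebra morphism, in convolution form. -/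
lemma aS_mul'_conv :
    (aS : H →ₗ[ℂ] H) ∘ₗ LinearMap.mul' ℂ H
      = conv ((aS : H →ₗ[ℂ] H) ∘ₗ pr2) (aS ∘ₗ pr1) := by
  have hY : conv (conv ((aS : H →ₗ[ℂ] H) ∘ₗ pr2) (aS ∘ₗ pr1)) (LinearMap.mul' ℂ H)
      = convOne := by
    rw [← conv_pr1_pr2, conv_assoc, ← conv_assoc ((aS : H →ₗ[ℂ] H) ∘ₗ pr1)]
    have h1 : conv ((aS : H →ₗ[ℂ] H) ∘ₗ pr1) pr1 = convOne := by
      have : conv ((aS : H →ₗ[ℂ] H) ∘ₗ pr1) (LinearMap.id ∘ₗ pr1) = convOne := by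
        have hp := conv_pull (C' := H ⊗[ℂ] H) (C := H) (A := H) pr1 comul_comp_pr1
          aS LinearMap.id
        rw [hp, conv_aS_id]
        exact convOne_pull (C' := H ⊗[ℂ] H) (C := H) (A := H) pr1 counit_comp_pr1
      simpa using this
    rw [h1, convOne_conv]
    have : conv ((aS : H →ₗ[ℂ] H) ∘ₗ pr2) (LinearMap.id ∘ₗ pr2) = convOne := by
      have hp := conv_pull (C' := H ⊗[ℂ] H) (C := H) (A := H) pr2 comul_comp_pr2
        aS LinearMap.id
      rw [hp, conv_aS_id]
      exact convOne_pull (C' := H ⊗[ℂ] H) (C := H) (A := H) pr2 counit_comp_pr2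
    simpa using this
  have hM : conv (LinearMap.mul' ℂ H) ((aS : H →ₗ[ℂ] H) ∘ₗ LinearMap.mul' ℂ H)
      = convOne := by
    have : conv (LinearMap.id ∘ₗ LinearMap.mul' ℂ H)
        ((aS : H →ₗ[ℂ] H) ∘ₗ LinearMap.mul' ℂ H) = convOne := by
      have hp := conv_pull (C' := H ⊗[ℂ] H) (C := H) (A := H) (LinearMap.mul' ℂ H)
        comul_comp_mul' LinearMap.id aS
      rw [hp, conv_id_aS]
      exact convOne_pull (C' := H ⊗[ℂ] H) (C := H) (A := H) (LinearMap.mul' ℂ H)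
        counit_comp_mul'
    simpa using this
  calc (aS : H →ₗ[ℂ] H) ∘ₗ LinearMap.mul' ℂ H
      = conv convOne ((aS : H →ₗ[ℂ] H) ∘ₗ LinearMap.mul' ℂ H) := (convOne_conv _).symm
    _ = conv (conv (conv ((aS : H →ₗ[ℂ] H) ∘ₗ pr2) (aS ∘ₗ pr1)) (LinearMap.mul' ℂ H))
        ((aS : H →ₗ[ℂ] H) ∘ₗ LinearMap.mul' ℂ H) := by rw [hY]
    _ = conv (conv ((aS : H →ₗ[ℂ] H) ∘ₗ pr2) (aS ∘ₗ pr1))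
        (conv (LinearMap.mul' ℂ H) ((aS : H →ₗ[ℂ] H) ∘ₗ LinearMap.mul' ℂ H)) :=
        conv_assoc _ _ _
    _ = conv (conv ((aS : H →ₗ[ℂ] H) ∘ₗ pr2) (aS ∘ₗ pr1)) convOne := by rw [hM]
    _ = conv ((aS : H →ₗ[ℂ] H) ∘ₗ pr2) (aS ∘ₗ pr1) := conv_convOne _

lemma aS_mul (a b : H) : aS (a * b) = aS b * aS a := by
  have h := congrArg (fun φ => φ (a ⊗ₜ[ℂ] b)) (aS_mul'_conv (H := H))
  simp only [LinearMap.comp_apply, LinearMap.mul'_apply] at h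
  rw [h, e2]
  simp

lemma aS_one : aS (1 : H) = 1 := by
  have h := HopfAlgebra.mul_antipode_rTensor_comul_apply (R := ℂ) (A := H) 1
  rw [Bialgebra.comul_one, Algebra.TensorProduct.one_def] at h
  simpa [aS] using h

lemma aS_algebraMap (c : ℂ) : aS (algebraMap ℂ H c) = algebraMap ℂ H c := by
  rw [Algebra.algebraMap_eq_smul_one, map_smul, aS_one]

end Hopf3
section Twisted

variable {H : Type} [Ring H] [HopfAlgebra ℂ H] (δ : H →ₐ[ℂ] ℂ)

/-- `h ↦ δ(h)•1` as a linear map `H → H`. -/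
def dl : H →ₗ[ℂ] H := Algebra.linearMap ℂ H ∘ₗ δ.toLinearMap

/-- `h ↦ δ(h)•1` as a linear map `H → H ⊗ H`. -/
def dl2 : H →ₗ[ℂ] H ⊗[ℂ] H := Algebra.linearMap ℂ (H ⊗[ℂ] H) ∘ₗ δ.toLinearMap

@[simp] lemma dl_apply (h : H) : dl δ h = algebraMap ℂ H (δ h) := rfl
@[simp] lemma dl2_apply (h : H) : dl2 δ h = algebraMap ℂ (H ⊗[ℂ] H) (δ h) := rfl

lemma St_eq : twistedAntipode H δ = conv (dl δ) (aS : H →ₗ[ℂ] H) := by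
  refine LinearMap.ext fun c => ?_
  set r := Repr.arbitrary ℂ c
  rw [conv_apply_repr _ _ r, twistedAntipode]
  simp only [LinearMap.comp_apply, ← r.eq, map_sum, TensorProduct.map_tmul]
  refine Finset.sum_congr rfl fun i _ => ?_
  rw [dl_apply, ← Algebra.smul_def]
  simp [aS]

lemma St_apply_repr {c : H} (r : Repr ℂ c) :
    twistedAntipode H δ c = ∑ i ∈ r.index, δ (r.left i) • aS (r.right i) := by
  rw [St_eq, conv_apply_repr _ _ r]
  refine Finset.sum_congr rfl fun i _ => ?_
  rw [dl_apply, ← Algebra.smul_def]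

lemma comul_comp_dl : Coalgebra.comul ∘ₗ dl δ = dl2 δ := by
  refine LinearMap.ext fun c => ?_
  simp only [LinearMap.comp_apply, dl_apply, dl2_apply]
  exact Bialgebra.comul_algebraMap _

lemma inr_comp_dl : inr ∘ₗ dl δ = dl2 δ := by
  refine LinearMap.ext fun c => ?_
  simp only [LinearMap.comp_apply, dl_apply, dl2_apply]
  exact (Algebra.TensorProduct.includeRight (R := ℂ) (A := H) (B := H)).commutes _

/-- The twisted antipode is anti-comultiplicative. -/
lemma comul_comp_St :
    Coalgebra.comul ∘ₗ twistedAntipode H δ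
      = TensorProduct.map aS (twistedAntipode H δ) ∘ₗ
          (TensorProduct.comm ℂ H H).toLinearMap ∘ₗ Coalgebra.comul := by
  rw [St_eq, ← e4]
  calc Coalgebra.comul ∘ₗ conv (dl δ) (aS : H →ₗ[ℂ] H)
      = conv (Coalgebra.comul ∘ₗ dl δ) (Coalgebra.comul ∘ₗ aS) := by
        rw [← comulAlgHom_toLinearMap]
        exact conv_push _ _ _
    _ = conv (dl2 δ) (conv (inr ∘ₗ aS) (inl ∘ₗ aS)) := by
        rw [comul_comp_dl, comul_aS_conv]
    _ = conv (conv (dl2 δ) (inr ∘ₗ aS)) (inl ∘ₗ aS) := (conv_assoc _ _ _).symm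
    _ = conv (inr ∘ₗ conv (dl δ) (aS : H →ₗ[ℂ] H)) (inl ∘ₗ aS) := by
        have h : conv (inr ∘ₗ dl δ) (inr ∘ₗ (aS : H →ₗ[ℂ] H))
            = inr ∘ₗ conv (dl δ) aS := by
          rw [← inr_comp_toLinearMap]
          exact (conv_push _ _ _).symm
        rw [← h, inr_comp_dl]

lemma comul_St_repr {x : H} (r : Repr ℂ x) :
    Coalgebra.comul (R := ℂ) (twistedAntipode H δ x)
      = ∑ i ∈ r.index, aS (r.right i) ⊗ₜ[ℂ] twistedAntipode H δ (r.left i) := by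
  have h := congrArg (fun φ => φ x) (comul_comp_St δ)
  simp only [LinearMap.comp_apply] at h
  rw [h, ← r.eq, map_sum, map_sum]
  simp

lemma dl_comp_mul' :
    dl δ ∘ₗ LinearMap.mul' ℂ H = conv (dl δ ∘ₗ pr2) (dl δ ∘ₗ pr1) := by
  rw [e2]
  apply TensorProduct.ext'
  intro h g
  simp only [LinearMap.comp_apply, LinearMap.mul'_apply, dl_apply, LinearEquiv.coe_coe,
    TensorProduct.comm_tmul, TensorProduct.map_tmul]
  rw [← map_mul, mul_comm (δ g), ← map_mul]

lemma swap_aS_dl :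
    conv ((aS : H →ₗ[ℂ] H) ∘ₗ pr2) (dl δ ∘ₗ pr1)
      = conv (dl δ ∘ₗ pr1) ((aS : H →ₗ[ℂ] H) ∘ₗ pr2) := by
  rw [e2, e1]
  apply TensorProduct.ext'
  intro h g
  simp only [LinearMap.comp_apply, LinearEquiv.coe_coe, TensorProduct.comm_tmul,
    TensorProduct.map_tmul, LinearMap.mul'_apply, dl_apply]
  rw [Algebra.commutes]

/-- The twisted antipode is anti-multiplicative, convolution form. -/
lemma St_mul'_conv :
    twistedAntipode H δ ∘ₗ LinearMap.mul' ℂ H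
      = conv (twistedAntipode H δ ∘ₗ pr2) (twistedAntipode H δ ∘ₗ pr1) := by
  have hpull2 : twistedAntipode H δ ∘ₗ pr2 = conv (dl δ ∘ₗ pr2) ((aS : H →ₗ[ℂ] H) ∘ₗ pr2) := by
    rw [St_eq]
    exact (conv_pull (C' := H ⊗[ℂ] H) (C := H) (A := H) pr2 comul_comp_pr2 _ _).symm
  have hpull1 : twistedAntipode H δ ∘ₗ pr1 = conv (dl δ ∘ₗ pr1) ((aS : H →ₗ[ℂ] H) ∘ₗ pr1) := by
    rw [St_eq]
    exact (conv_pull (C' := H ⊗[ℂ] H) (C := H) (A := H) pr1 comul_comp_pr1 _ _).symm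
  have hpullm : twistedAntipode H δ ∘ₗ LinearMap.mul' ℂ H
      = conv (dl δ ∘ₗ LinearMap.mul' ℂ H) ((aS : H →ₗ[ℂ] H) ∘ₗ LinearMap.mul' ℂ H) := by
    rw [St_eq]
    exact (conv_pull (C' := H ⊗[ℂ] H) (C := H) (A := H)
      (LinearMap.mul' ℂ H) comul_comp_mul' _ _).symm
  rw [hpull1, hpull2, hpullm, dl_comp_mul', aS_mul'_conv]
  -- (a⋆b)⋆(c⋆d) = (a⋆c)⋆(b⋆d) with b⋆c = c⋆b
  set a := dl δ ∘ₗ pr2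
  set b := (aS : H →ₗ[ℂ] H) ∘ₗ pr2
  set c := dl δ ∘ₗ pr1
  set d := (aS : H →ₗ[ℂ] H) ∘ₗ pr1
  calc conv (conv a c) (conv b d)
      = conv a (conv c (conv b d)) := conv_assoc _ _ _
    _ = conv a (conv (conv c b) d) := by rw [conv_assoc c b d]
    _ = conv a (conv (conv b c) d) := by rw [swap_aS_dl]
    _ = conv a (conv b (conv c d)) := by rw [conv_assoc b c d]
    _ = conv (conv a b) (conv c d) := (conv_assoc _ _ _).symm

lemma St_mul (x y : H) :
    twistedAntipode H δ (x * y) = twistedAntipode H δ y * twistedAntipode H δ x := by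
  have h := congrArg (fun φ => φ (x ⊗ₜ[ℂ] y)) (St_mul'_conv δ)
  simp only [LinearMap.comp_apply, LinearMap.mul'_apply] at h
  rw [h, e2]
  simp

end Twisted
section Main

variable {H : Type} [Ring H] [HopfAlgebra ℂ H] (δ : H →ₐ[ℂ] ℂ)

/-- A representation of `comul (S x)` from one of `comul x`. -/
def Repr.antipode {z : H} (r : Repr ℂ z) : Repr ℂ (aS z) where
  index := r.index
  left := fun i => aS (r.right i)
  right := fun i => aS (r.left i)
  eq := (comul_aS_repr r).symm

lemma theta_repr {x : H} (r : Repr ℂ x) :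
    ∑ i ∈ r.index, aS (aS (r.right i)) * aS (r.left i)
      = algebraMap ℂ H (counit (R := ℂ) x) := by
  have step : ∀ i ∈ r.index,
      aS (aS (r.right i)) * aS (r.left i) = aS (r.left i * aS (r.right i)) :=
    fun i _ => (aS_mul _ _).symm
  rw [Finset.sum_congr rfl step, ← map_sum]
  have h := HopfAlgebra.sum_mul_antipode_eq_algebraMap_counit (R := ℂ) r
  have h' : ∑ i ∈ r.index, r.left i * aS (r.right i) = algebraMap ℂ H (counit (R := ℂ) x) := h
  rw [h', aS_algebraMap]

lemma phi_repr {x : H} (r : Repr ℂ x) :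
    ∑ i ∈ r.index, aS (aS (r.right i)) * twistedAntipode H δ (r.left i)
      = algebraMap ℂ H (δ x) := by
  set a : (i : r.ι) → Repr ℂ (r.left i) := fun i => Repr.arbitrary ℂ (r.left i) with ha
  set b : (i : r.ι) → Repr ℂ (r.right i) := fun i => Repr.arbitrary ℂ (r.right i) with hb
  set T : H ⊗[ℂ] (H ⊗[ℂ] H) →ₗ[ℂ] H :=
    LinearMap.mul' ℂ H ∘ₗ TensorProduct.map (dl δ)
      (LinearMap.mul' ℂ H ∘ₗ TensorProduct.map ((aS : H →ₗ[ℂ] H) ∘ₗ aS) aS ∘ₗ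
        (TensorProduct.comm ℂ H H).toLinearMap) with hT
  have Tapp : ∀ u v w : H, T (u ⊗ₜ[ℂ] (v ⊗ₜ[ℂ] w))
      = algebraMap ℂ H (δ u) * (aS (aS w) * aS v) := by
    intro u v w
    simp [hT]
  calc ∑ i ∈ r.index, aS (aS (r.right i)) * twistedAntipode H δ (r.left i)
      = ∑ i ∈ r.index, ∑ j ∈ (a i).index,
          T ((a i).left j ⊗ₜ[ℂ] ((a i).right j ⊗ₜ[ℂ] r.right i)) := by
        refine Finset.sum_congr rfl fun i _ => ?_
        rw [St_apply_repr δ (a i), Finset.mul_sum]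
        refine Finset.sum_congr rfl fun j _ => ?_
        rw [Tapp, ← Algebra.smul_def, mul_smul_comm]
    _ = ∑ i ∈ r.index, ∑ j ∈ (b i).index,
          T (r.left i ⊗ₜ[ℂ] ((b i).left j ⊗ₜ[ℂ] (b i).right j)) := three_split T r a b
    _ = ∑ i ∈ r.index, algebraMap ℂ H (δ (r.left i)) *
          algebraMap ℂ H (counit (R := ℂ) (r.right i)) := by
        refine Finset.sum_congr rfl fun i _ => ?_
        have : ∀ j ∈ (b i).index, T (r.left i ⊗ₜ[ℂ] ((b i).left j ⊗ₜ[ℂ] (b i).right j))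
            = algebraMap ℂ H (δ (r.left i)) * (aS (aS ((b i).right j)) * aS ((b i).left j)) :=
          fun j _ => Tapp _ _ _
        rw [Finset.sum_congr rfl this, ← Finset.mul_sum, theta_repr (b i)]
    _ = algebraMap ℂ H (δ x) := by
        have step : ∀ i ∈ r.index,
            algebraMap ℂ H (δ (r.left i)) * algebraMap ℂ H (counit (R := ℂ) (r.right i))
              = algebraMap ℂ H (δ (counit (R := ℂ) (r.right i) • r.left i)) := by
          intro i _
          rw [← map_mul, mul_comm, ← smul_eq_mul, ← map_smul]
        rw [Finset.sum_congr rfl step, ← map_sum, ← map_sum, sum_smul_counit]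

lemma tau2_tmul (x y : H) :
    tau2 H δ (x ⊗ₜ[ℂ] y)
      = Coalgebra.comul (R := ℂ) (twistedAntipode H δ x) * (y ⊗ₜ[ℂ] 1) := by
  simp [tau2]

lemma tau2_tau2_tmul (hS : twistedAntipode H δ ∘ₗ twistedAntipode H δ = LinearMap.id)
    (x y : H) :
    tau2 H δ (tau2 H δ (x ⊗ₜ[ℂ] y))
      = Coalgebra.comul (R := ℂ) (twistedAntipode H δ y) * ((1 : H) ⊗ₜ[ℂ] x) := by
  have hSS : ∀ z : H, twistedAntipode H δ (twistedAntipode H δ z) = z := by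
    intro z
    have := congrArg (fun φ => φ z) hS
    simpa using this
  set r := Repr.arbitrary ℂ x with hr
  set a : (i : r.ι) → Repr ℂ (r.left i) := fun i => Repr.arbitrary ℂ (r.left i) with ha
  set c : (i : r.ι) → Repr ℂ (r.right i) := fun i => Repr.arbitrary ℂ (r.right i) with hc
  set T : H ⊗[ℂ] (H ⊗[ℂ] H) →ₗ[ℂ] H ⊗[ℂ] H :=
    LinearMap.mulLeft ℂ (Coalgebra.comul (R := ℂ) (twistedAntipode H δ y)) ∘ₗ
      TensorProduct.map
        (LinearMap.mul' ℂ H ∘ₗ TensorProduct.map ((aS : H →ₗ[ℂ] H) ∘ₗ aS)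
          (twistedAntipode H δ) ∘ₗ (TensorProduct.comm ℂ H H).toLinearMap)
        (twistedAntipode H δ ∘ₗ (aS : H →ₗ[ℂ] H)) ∘ₗ
      (TensorProduct.assoc ℂ H H H).symm.toLinearMap with hT
  have Tapp : ∀ u v w : H, T (u ⊗ₜ[ℂ] (v ⊗ₜ[ℂ] w))
      = Coalgebra.comul (R := ℂ) (twistedAntipode H δ y) *
          ((aS (aS v) * twistedAntipode H δ u) ⊗ₜ[ℂ] twistedAntipode H δ (aS w)) := by
    intro u v w
    simp [hT]
  calc tau2 H δ (tau2 H δ (x ⊗ₜ[ℂ] y))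
      = tau2 H δ (∑ i ∈ r.index, (aS (r.right i) * y) ⊗ₜ[ℂ] twistedAntipode H δ (r.left i)) := by
        rw [tau2_tmul, comul_St_repr δ r, Finset.sum_mul]
        congr 1
        refine Finset.sum_congr rfl fun i _ => ?_
        rw [Algebra.TensorProduct.tmul_mul_tmul, mul_one]
    _ = ∑ i ∈ r.index,
          Coalgebra.comul (R := ℂ) (twistedAntipode H δ (aS (r.right i) * y)) *
            (twistedAntipode H δ (r.left i) ⊗ₜ[ℂ] 1) := by
        rw [map_sum]
        exact Finset.sum_congr rfl fun i _ => tau2_tmul δ _ _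
    _ = ∑ i ∈ r.index, ∑ j ∈ (c i).index,
          T (r.left i ⊗ₜ[ℂ] ((c i).left j ⊗ₜ[ℂ] (c i).right j)) := by
        refine Finset.sum_congr rfl fun i _ => ?_
        rw [St_mul δ, Bialgebra.comul_mul, comul_St_repr δ (Repr.antipode (c i))]
        have expand : (∑ j ∈ (Repr.antipode (c i)).index,
            aS ((Repr.antipode (c i)).right j) ⊗ₜ[ℂ]
              twistedAntipode H δ ((Repr.antipode (c i)).left j))
            = ∑ j ∈ (c i).index,
              aS (aS ((c i).left j)) ⊗ₜ[ℂ] twistedAntipode H δ (aS ((c i).right j)) := rfl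
        rw [expand, Finset.mul_sum, Finset.sum_mul]
        refine Finset.sum_congr rfl fun j _ => ?_
        rw [Tapp, mul_assoc, Algebra.TensorProduct.tmul_mul_tmul, mul_one]
    _ = ∑ i ∈ r.index, ∑ j ∈ (a i).index,
          T ((a i).left j ⊗ₜ[ℂ] ((a i).right j ⊗ₜ[ℂ] r.right i)) :=
        (three_split T r a c).symm
    _ = ∑ i ∈ r.index,
          Coalgebra.comul (R := ℂ) (twistedAntipode H δ y) *
            (algebraMap ℂ H (δ (r.left i)) ⊗ₜ[ℂ] twistedAntipode H δ (aS (r.right i))) := by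
        refine Finset.sum_congr rfl fun i _ => ?_
        have : ∀ j ∈ (a i).index, T ((a i).left j ⊗ₜ[ℂ] ((a i).right j ⊗ₜ[ℂ] r.right i))
            = Coalgebra.comul (R := ℂ) (twistedAntipode H δ y) *
              ((aS (aS ((a i).right j)) * twistedAntipode H δ ((a i).left j)) ⊗ₜ[ℂ]
                twistedAntipode H δ (aS (r.right i))) := fun j _ => Tapp _ _ _
        rw [Finset.sum_congr rfl this, ← Finset.mul_sum, ← TensorProduct.sum_tmul,
          phi_repr δ (a i)]
    _ = Coalgebra.comul (R := ℂ) (twistedAntipode H δ y) * ((1 : H) ⊗ₜ[ℂ] x) := by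
        rw [← Finset.mul_sum]
        congr 1
        calc ∑ i ∈ r.index,
              algebraMap ℂ H (δ (r.left i)) ⊗ₜ[ℂ] twistedAntipode H δ (aS (r.right i))
            = ∑ i ∈ r.index,
              (1 : H) ⊗ₜ[ℂ] (δ (r.left i) • twistedAntipode H δ (aS (r.right i))) := by
              refine Finset.sum_congr rfl fun i _ => ?_
              rw [Algebra.algebraMap_eq_smul_one, TensorProduct.smul_tmul]
          _ = (1 : H) ⊗ₜ[ℂ] twistedAntipode H δ (∑ i ∈ r.index, δ (r.left i) • aS (r.right i)) := by
              rw [← TensorProduct.tmul_sum, map_sum]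
              simp only [map_smul]
          _ = (1 : H) ⊗ₜ[ℂ] x := by
              rw [← St_apply_repr δ r, hSS]

lemma tau2_comul_St (hS : twistedAntipode H δ ∘ₗ twistedAntipode H δ = LinearMap.id)
    (x y : H) :
    tau2 H δ (Coalgebra.comul (R := ℂ) (twistedAntipode H δ y) * ((1 : H) ⊗ₜ[ℂ] x))
      = x ⊗ₜ[ℂ] y := by
  have hSS : ∀ z : H, twistedAntipode H δ (twistedAntipode H δ z) = z := by
    intro z
    have := congrArg (fun φ => φ z) hS
    simpa using this
  set r := Repr.arbitrary ℂ y with hr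
  set a : (i : r.ι) → Repr ℂ (r.left i) := fun i => Repr.arbitrary ℂ (r.left i) with ha
  set c : (i : r.ι) → Repr ℂ (r.right i) := fun i => Repr.arbitrary ℂ (r.right i) with hc
  set T : H ⊗[ℂ] (H ⊗[ℂ] H) →ₗ[ℂ] H ⊗[ℂ] H :=
    TensorProduct.map
      (LinearMap.mul' ℂ H ∘ₗ TensorProduct.map ((aS : H →ₗ[ℂ] H) ∘ₗ aS)
        (LinearMap.mulRight ℂ x ∘ₗ twistedAntipode H δ) ∘ₗ
        (TensorProduct.comm ℂ H H).toLinearMap)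
      (twistedAntipode H δ ∘ₗ (aS : H →ₗ[ℂ] H)) ∘ₗ
    (TensorProduct.assoc ℂ H H H).symm.toLinearMap with hT
  have Tapp : ∀ u v w : H, T (u ⊗ₜ[ℂ] (v ⊗ₜ[ℂ] w))
      = (aS (aS v) * (twistedAntipode H δ u * x)) ⊗ₜ[ℂ] twistedAntipode H δ (aS w) := by
    intro u v w
    simp [hT]
  calc tau2 H δ (Coalgebra.comul (R := ℂ) (twistedAntipode H δ y) * ((1 : H) ⊗ₜ[ℂ] x))
      = tau2 H δ (∑ i ∈ r.index,
          aS (r.right i) ⊗ₜ[ℂ] (twistedAntipode H δ (r.left i) * x)) := by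
        rw [comul_St_repr δ r, Finset.sum_mul]
        congr 1
        refine Finset.sum_congr rfl fun i _ => ?_
        rw [Algebra.TensorProduct.tmul_mul_tmul, mul_one]
    _ = ∑ i ∈ r.index,
          Coalgebra.comul (R := ℂ) (twistedAntipode H δ (aS (r.right i))) *
            ((twistedAntipode H δ (r.left i) * x) ⊗ₜ[ℂ] 1) := by
        rw [map_sum]
        exact Finset.sum_congr rfl fun i _ => tau2_tmul δ _ _
    _ = ∑ i ∈ r.index, ∑ j ∈ (c i).index,
          T (r.left i ⊗ₜ[ℂ] ((c i).left j ⊗ₜ[ℂ] (c i).right j)) := by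
        refine Finset.sum_congr rfl fun i _ => ?_
        rw [comul_St_repr δ (Repr.antipode (c i))]
        have expand : (∑ j ∈ (Repr.antipode (c i)).index,
            aS ((Repr.antipode (c i)).right j) ⊗ₜ[ℂ]
              twistedAntipode H δ ((Repr.antipode (c i)).left j))
            = ∑ j ∈ (c i).index,
              aS (aS ((c i).left j)) ⊗ₜ[ℂ] twistedAntipode H δ (aS ((c i).right j)) := rfl
        rw [expand, Finset.sum_mul]
        refine Finset.sum_congr rfl fun j _ => ?_
        rw [Tapp, Algebra.TensorProduct.tmul_mul_tmul, mul_one]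
    _ = ∑ i ∈ r.index, ∑ j ∈ (a i).index,
          T ((a i).left j ⊗ₜ[ℂ] ((a i).right j ⊗ₜ[ℂ] r.right i)) :=
        (three_split T r a c).symm
    _ = ∑ i ∈ r.index,
          (δ (r.left i) • x) ⊗ₜ[ℂ] twistedAntipode H δ (aS (r.right i)) := by
        refine Finset.sum_congr rfl fun i _ => ?_
        have : ∀ j ∈ (a i).index, T ((a i).left j ⊗ₜ[ℂ] ((a i).right j ⊗ₜ[ℂ] r.right i))
            = (aS (aS ((a i).right j)) * (twistedAntipode H δ ((a i).left j) * x)) ⊗ₜ[ℂ]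
                twistedAntipode H δ (aS (r.right i)) := fun j _ => Tapp _ _ _
        rw [Finset.sum_congr rfl this, ← TensorProduct.sum_tmul]
        congr 1
        have assoc' : ∀ j ∈ (a i).index,
            aS (aS ((a i).right j)) * (twistedAntipode H δ ((a i).left j) * x)
              = (aS (aS ((a i).right j)) * twistedAntipode H δ ((a i).left j)) * x :=
          fun j _ => (mul_assoc _ _ _).symm
        rw [Finset.sum_congr rfl assoc', ← Finset.sum_mul, phi_repr δ (a i),
          ← Algebra.smul_def]
    _ = x ⊗ₜ[ℂ] y := by
        calc ∑ i ∈ r.index, (δ (r.left i) • x) ⊗ₜ[ℂ] twistedAntipode H δ (aS (r.right i))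
            = ∑ i ∈ r.index, x ⊗ₜ[ℂ] (δ (r.left i) • twistedAntipode H δ (aS (r.right i))) := by
              refine Finset.sum_congr rfl fun i _ => ?_
              rw [TensorProduct.smul_tmul]
          _ = x ⊗ₜ[ℂ] twistedAntipode H δ (∑ i ∈ r.index, δ (r.left i) • aS (r.right i)) := by
              rw [← TensorProduct.tmul_sum, map_sum]
              simp only [map_smul]
          _ = x ⊗ₜ[ℂ] y := by rw [← St_apply_repr δ r, hSS]

end Main

end Tau2Aux


/-- Assume the `δ`-twisted antipode is an involution, `S̃² = id`.  Then the
cyclic operator `τ₂` on `H ⊗ H` satisfies `τ₂³ = id`. -/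
theorem tau2_cube (δ : H →ₐ[ℂ] ℂ)
    (hS : twistedAntipode H δ ∘ₗ twistedAntipode H δ = LinearMap.id) :
    tau2 H δ ∘ₗ tau2 H δ ∘ₗ tau2 H δ = LinearMap.id := by
  apply TensorProduct.ext'
  intro x y
  simp only [LinearMap.comp_apply, LinearMap.id_apply]
  rw [Tau2Aux.tau2_tau2_tmul δ hS x y, Tau2Aux.tau2_comul_St δ hS x y]
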